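/- arXiv:2411.10649 — 2 statements merged into one kernel-verified Lean document; each statement's English description precedes it below -/
import Mathlib

section
/- Let f : ℝⁿ → ℝ be differentiable and μ-strongly star-convex with constant μ ≥ 0 and global minimizer ω* ∈ ℝⁿ, and suppose the gradient of f vanishes at ω*. Then for all λ ∈ [0,1] and all ω ∈ ℝⁿ, setting ω̃ = (1−λ)ω* + λω, it holds that f(ω*) ≤ f(ω̃) − (μ/2)‖ω* − ω̃‖². -/
/-!
Restrict to the ray `t ↦ ωs + t • v` with `v = ω - ωs` and put
`g t = f (ωs + t • v) - f ωs - μ / 2 * t ^ 2 * ‖v‖ ^ 2`. Strong star-convexity at the point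
with parameter `t` says exactly `g t ≤ t * g' t`, i.e. the slope `g t / t` is nondecreasing on
`t > 0`. As `t → 0⁺` that slope tends to `g' 0 = 0` because the gradient vanishes at `ωs`,
so `g t ≥ 0` for every `t ≥ 0`.
-/

open RealInnerProductSpace Filter Topology Set

section SlopeFromOrigin

variable {g g' : ℝ → ℝ}

theorem monotoneOn_div_of_le_mul_deriv (hg : ∀ t, 0 < t → HasDerivAt g (g' t) t)
    (hle : ∀ t, 0 < t → g t ≤ t * g' t) : MonotoneOn (fun t => g t / t) (Ioi 0) := by
  have hdiv (t : ℝ) (ht : t ∈ Ioi 0) :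
      HasDerivAt (fun s => g s / s) ((g' t * t - g t * 1) / t ^ 2) t :=
    (hg t ht).div (hasDerivAt_id t) ht.ne'
  refine monotoneOn_of_hasDerivWithinAt_nonneg (convex_Ioi 0)
    (fun t ht => (hdiv t ht).continuousAt.continuousWithinAt)
    (fun t ht => (hdiv t (interior_subset ht)).hasDerivWithinAt) fun t ht => ?_
  rw [interior_Ioi] at ht
  have := hle t ht
  exact div_nonneg (by linarith) (sq_nonneg t)

theorem tendsto_div_nhdsGT_of_hasDerivAt_zero (h0 : g 0 = 0) (hg : HasDerivAt g 0 0) :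
    Tendsto (fun t => g t / t) (𝓝[>] 0) (𝓝 0) := by
  have := (hasDerivAt_iff_tendsto_slope_zero.mp hg).mono_left
    (nhdsWithin_mono 0 fun t (ht : t ∈ Ioi (0 : ℝ)) => ht.ne')
  simpa [h0, div_eq_inv_mul] using this

theorem nonneg_of_le_mul_deriv (hg : ∀ t, 0 ≤ t → HasDerivAt g (g' t) t) (h0 : g 0 = 0)
    (h0' : g' 0 = 0) (hle : ∀ t, 0 < t → g t ≤ t * g' t) {t : ℝ} (ht : 0 ≤ t) : 0 ≤ g t := by
  rcases ht.eq_or_lt with rfl | ht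
  · exact h0.ge
  have hmono := monotoneOn_div_of_le_mul_deriv (fun s hs => hg s hs.le) hle
  have hlim := tendsto_div_nhdsGT_of_hasDerivAt_zero h0 (h0' ▸ hg 0 le_rfl :)
  have hslope : 0 ≤ g t / t := le_of_tendsto hlim <| by
    filter_upwards [Ioo_mem_nhdsGT ht] with s hs
    exact hmono hs.1 ht hs.2.le
  simpa using (le_div_iff₀ ht).mp hslope

end SlopeFromOrigin

theorem HasGradientAt.hasDerivAt_comp_add_smul {E : Type*} [NormedAddCommGroup E]
    [InnerProductSpace ℝ E] [CompleteSpace E] {f : E → ℝ} {f' x v : E} {t : ℝ}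
    (hf : HasGradientAt f f' (x + t • v)) :
    HasDerivAt (fun s : ℝ => f (x + s • v)) ⟪f', v⟫ t := by
  have hline : HasDerivAt (fun s : ℝ => x + s • v) v t := by
    simpa using ((hasDerivAt_id t).smul_const v).const_add x
  have := hf.hasFDerivAt.comp_hasDerivAt t hline
  simp only [InnerProductSpace.toDual_apply_apply] at this
  exact this

theorem strong_star_convex_imp_eq7_general {n : ℕ} (f : EuclideanSpace ℝ (Fin n) → ℝ) (μ : ℝ)
    (hdiff : Differentiable ℝ f) (ωs : EuclideanSpace ℝ (Fin n))
    (hssc : ∀ ω : EuclideanSpace ℝ (Fin n),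
      f ω + ⟪gradient f ω, ωs - ω⟫ + μ / 2 * ‖ωs - ω‖ ^ 2 ≤ f ωs)
    (hgrad : gradient f ωs = 0) :
    ∀ lam : ℝ, lam ∈ Set.Icc (0 : ℝ) 1 → ∀ ω : EuclideanSpace ℝ (Fin n),
      f ωs ≤ f ((1 - lam) • ωs + lam • ω)
        - μ / 2 * ‖ωs - ((1 - lam) • ωs + lam • ω)‖ ^ 2 := by
  intro lam hlam ω
  set v := ω - ωs
  have hpoint (t : ℝ) : (1 - t) • ωs + t • ω = ωs + t • v := by module
  have hdist (t : ℝ) : ‖ωs - (ωs + t • v)‖ ^ 2 = t ^ 2 * ‖v‖ ^ 2 := by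
    rw [sub_add_cancel_left, norm_neg, norm_smul, mul_pow, Real.norm_eq_abs, sq_abs]
  set g : ℝ → ℝ := fun t => f (ωs + t • v) - f ωs - μ / 2 * t ^ 2 * ‖v‖ ^ 2
  set g' : ℝ → ℝ := fun t => ⟪gradient f (ωs + t • v), v⟫ - μ * t * ‖v‖ ^ 2
  have hg (t : ℝ) : HasDerivAt g (g' t) t := by
    have hsq := ((hasDerivAt_pow 2 t).const_mul (μ / 2)).mul_const (‖v‖ ^ 2)
    have hray := (hdiff (ωs + t • v)).hasGradientAt.hasDerivAt_comp_add_smul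
    exact ((hray.sub_const (f ωs)).sub hsq).congr_deriv (by simp only [g']; ring)
  have hle (t : ℝ) (_ : 0 < t) : g t ≤ t * g' t := by
    have h := hssc (ωs + t • v)
    rw [hdist, sub_add_cancel_left, inner_neg_right, real_inner_smul_right] at h
    simp only [g, g']
    linarith
  have hg0 : g' 0 = 0 := by simp only [g', zero_smul, add_zero, hgrad, inner_zero_left]; ring
  have hnonneg := nonneg_of_le_mul_deriv (fun t _ => hg t) (by simp [g]) hg0 hle hlam.1
  rw [hpoint, hdist]
  simp only [g] at hnonneg
  linarith

/-- Lemma 1 (Eq. 7) direction: strong star-convexity (gradient form) with vanishing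
gradient at the minimizer implies the quadratic-growth inequality along segments. -/
theorem strong_star_convex_imp_eq7 {n : ℕ} (f : EuclideanSpace ℝ (Fin n) → ℝ) (μ : ℝ)
    (hμ : 0 ≤ μ) (hdiff : Differentiable ℝ f) (ωs : EuclideanSpace ℝ (Fin n))
    (hmin : ∀ ω, f ωs ≤ f ω)
    (hssc : ∀ ω : EuclideanSpace ℝ (Fin n),
      f ω + ⟪gradient f ω, ωs - ω⟫ + μ / 2 * ‖ωs - ω‖ ^ 2 ≤ f ωs)
    (hgrad : gradient f ωs = 0) :
    ∀ lam : ℝ, lam ∈ Set.Icc (0 : ℝ) 1 → ∀ ω : EuclideanSpace ℝ (Fin n),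
      f ωs ≤ f ((1 - lam) • ωs + lam • ω)
        - μ / 2 * ‖ωs - ((1 - lam) • ωs + lam • ω)‖ ^ 2 :=
  strong_star_convex_imp_eq7_general f μ hdiff ωs hssc hgrad
end

section
/- Let f : ℝⁿ → ℝ be L-Lipschitz with constant L > 0, let μ > 0 and γ ≥ 0, and let ω, ω* ∈ ℝⁿ satisfy the slack-relaxed strong star-convexity condition f(ω*) ≤ f(ω) − (μ/2)‖ω* − ω‖² + γ. Then ‖ω − ω*‖ ≤ (L/μ)·(1 + (1 + (2μ/L²)·γ)^{1/2}). -/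
/-- Extension of Lemma 2 with slack γ: if the strong star-convexity constraint is
violated with slack γ, the distance bound degrades accordingly. -/
theorem dist_le_slack_bound {n : ℕ} (f : EuclideanSpace ℝ (Fin n) → ℝ)
    (L μ γ : ℝ) (hL : 0 < L) (hμ : 0 < μ) (hγ : 0 ≤ γ)
    (hlip : ∀ ω ω' : EuclideanSpace ℝ (Fin n), |f ω - f ω'| ≤ L * ‖ω - ω'‖)
    (ωs ω : EuclideanSpace ℝ (Fin n))
    (h : f ωs ≤ f ω - μ / 2 * ‖ωs - ω‖ ^ 2 + γ) :
    ‖ω - ωs‖ ≤ L / μ * (1 + Real.sqrt (1 + 2 * μ / L ^ 2 * γ)) := by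
  set r := ‖ωs - ω‖ with hr
  have hr0 : 0 ≤ r := norm_nonneg _
  have hlipb : |f ω - f ωs| ≤ L * r := by
    have := hlip ω ωs
    rwa [show ‖ω - ωs‖ = r by rw [hr, norm_sub_rev]] at this
  have key : μ * r ^ 2 ≤ 2 * L * r + 2 * γ := by
    have h1 : f ω - f ωs ≤ L * r := (abs_le.mp hlipb).2
    nlinarith [h1, h]
  -- rewrite sqrt
  have hL2 : (0:ℝ) < L ^ 2 := by positivity
  have hs_arg : (0:ℝ) ≤ L ^ 2 + 2 * μ * γ := by nlinarith
  have hsqrt_eq : Real.sqrt (1 + 2 * μ / L ^ 2 * γ) =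
      Real.sqrt (L ^ 2 + 2 * μ * γ) / L := by
    have harg : 1 + 2 * μ / L ^ 2 * γ = (L ^ 2 + 2 * μ * γ) / L ^ 2 := by
      field_simp
    rw [harg, Real.sqrt_div hs_arg, Real.sqrt_sq hL.le]
  set s := Real.sqrt (L ^ 2 + 2 * μ * γ) with hs
  have hs0 : 0 ≤ s := Real.sqrt_nonneg _
  have hs2 : s ^ 2 = L ^ 2 + 2 * μ * γ := Real.sq_sqrt hs_arg
  have hgoal : μ * r ≤ L + s := by
    nlinarith [sq_nonneg (μ * r - L - s), sq_nonneg (μ * r - L + s), key, hs2,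
      mul_nonneg hs0 hr0]
  rw [norm_sub_rev, hsqrt_eq]
  rw [div_mul_eq_mul_div, le_div_iff₀ hμ]
  have : L * (1 + s / L) = L + s := by field_simp
  rw [this]
  linarith [hgoal]
end
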